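/- Consider a rooted finite tree built recursively as follows: a tree is either a single leaf (an original job), or consists of a root (artificial job) with a single child node (a slot) having exactly two subtrees of the same recursive form. Then for every leaf j' of the tree, there exists a bijection φ from the set of leaves other than j' to the set of slot nodes, such that for every leaf ℓ ≠ j', the slot φ(ℓ) is an ancestor-or-descendant-compatible slot, namely φ(ℓ) lies on the path structure so that ℓ is a leaf of one of the two subtrees below φ(ℓ). -/

import Mathlib

/-- A subsumption tree: either a single original job (leaf), or an artificial
job whose unique child is a slot with two subtrees. -/
inductive SubTree : Type
  | leaf : SubTree
  | node : SubTree → SubTree → SubTree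

/-- Positions (paths from the root) of the leaves of the tree. -/
def SubTree.leafPositions : SubTree → List (List Bool)
  | .leaf => [[]]
  | .node l r =>
      l.leafPositions.map (List.cons false) ++ r.leafPositions.map (List.cons true)

/-- Positions (paths from the root) of the slot nodes of the tree. -/
def SubTree.slotPositions : SubTree → List (List Bool)
  | .leaf => []
  | .node l r =>
      [] :: (l.slotPositions.map (List.cons false) ++ r.slotPositions.map (List.cons true))

/-!
The leaves of `node l r` other than `b :: q` are the leaves of side `b` other than `q`, which
match the slots of that side by induction, together with all leaves of the other side `c`. Any one
of the latter, `c :: p`, goes to the root slot `[]`, a prefix of every position, and the others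
match the slots of side `c` by induction applied to `p`.
-/

def HasPerfectMatching {α β : Type*} (r : α → β → Prop) (X : Set α) (Y : Set β) : Prop :=
  ∃ φ : X ≃ Y, ∀ x : X, r x (φ x)

namespace HasPerfectMatching

variable {α β γ δ : Type*} {r : α → β → Prop} {X X₁ X₂ : Set α} {Y Y₁ Y₂ : Set β}

theorem empty (r : α → β → Prop) : HasPerfectMatching r ∅ ∅ :=
  ⟨Equiv.equivOfIsEmpty _ _, fun x => isEmptyElim x⟩

theorem union (h₁ : HasPerfectMatching r X₁ Y₁) (h₂ : HasPerfectMatching r X₂ Y₂)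
    (hX : Disjoint X₁ X₂) (hY : Disjoint Y₁ Y₂) : HasPerfectMatching r (X₁ ∪ X₂) (Y₁ ∪ Y₂) := by
  classical
  obtain ⟨φ₁, hφ₁⟩ := h₁
  obtain ⟨φ₂, hφ₂⟩ := h₂
  refine ⟨(Equiv.Set.union hX).trans ((φ₁.sumCongr φ₂).trans (Equiv.Set.union hY).symm), ?_⟩
  rintro ⟨x, hx⟩
  by_cases hx₁ : x ∈ X₁
  · simpa [Equiv.Set.union, Equiv.Set.union', hx₁] using hφ₁ ⟨x, hx₁⟩
  · have hx₂ : x ∈ X₂ := hx.resolve_left hx₁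
    simpa [Equiv.Set.union, Equiv.Set.union', hx₁] using hφ₂ ⟨x, hx₂⟩

theorem singleton {a : α} {b : β} (hab : r a b) : HasPerfectMatching r {a} {b} :=
  ⟨Equiv.ofUnique _ _, fun ⟨_, rfl⟩ => hab⟩

theorem insert (h : HasPerfectMatching r X Y) {a : α} {b : β} (ha : a ∉ X) (hb : b ∉ Y)
    (hab : r a b) : HasPerfectMatching r (insert a X) (insert b Y) := by
  rw [Set.insert_eq, Set.insert_eq]
  exact (singleton hab).union h (Set.disjoint_singleton_left.mpr ha)
    (Set.disjoint_singleton_left.mpr hb)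

theorem image (h : HasPerfectMatching r X Y) {r' : γ → δ → Prop} {f : α → γ} {g : β → δ}
    (hf : f.Injective) (hg : g.Injective) (hr : ∀ a b, r a b → r' (f a) (g b)) :
    HasPerfectMatching r' (f '' X) (g '' Y) := by
  obtain ⟨φ, hφ⟩ := h
  refine ⟨((Equiv.Set.image f X hf).symm.trans φ).trans (Equiv.Set.image g Y hg), ?_⟩
  rintro ⟨_, x, hx, rfl⟩
  have hsymm := Equiv.Set.image_symm_apply f X hf x ⟨x, hx, rfl⟩
  simpa [hsymm] using hr _ _ (hφ ⟨x, hx⟩)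

end HasPerfectMatching

section PrefixMatching

variable {α : Type*}

theorem HasPerfectMatching.image_cons {X Y : Set (List α)}
    (h : HasPerfectMatching (fun ℓ s => s <+: ℓ) X Y) (b : α) :
    HasPerfectMatching (fun ℓ s => s <+: ℓ) (List.cons b '' X) (List.cons b '' Y) :=
  h.image List.cons_injective List.cons_injective
    fun _ _ h => List.cons_prefix_cons.mpr ⟨rfl, h⟩

theorem Set.image_cons_sdiff_singleton {b : α} {L : Set (List α)} {q : List α} :
    List.cons b '' L \ {b :: q} = List.cons b '' (L \ {q}) := by
  rw [Set.image_sdiff List.cons_injective, Set.image_singleton]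

theorem hasPerfectMatching_prefix_node {b c : α} (hbc : b ≠ c) {L₁ L₂ S₁ S₂ : Set (List α)}
    {q p : List α} (h₁ : HasPerfectMatching (fun ℓ s => s <+: ℓ) (L₁ \ {q}) S₁)
    (h₂ : HasPerfectMatching (fun ℓ s => s <+: ℓ) (L₂ \ {p}) S₂) (hp : p ∈ L₂) :
    HasPerfectMatching (fun ℓ s => s <+: ℓ) ((List.cons b '' L₁ ∪ List.cons c '' L₂) \ {b :: q})
      (insert [] (List.cons b '' S₁ ∪ List.cons c '' S₂)) := by
  have hbq : b :: q ∉ List.cons c '' L₂ := by simp [hbc.symm]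
  have hL : (List.cons b '' L₁ ∪ List.cons c '' L₂) \ {b :: q} =
      List.cons b '' (L₁ \ {q}) ∪ insert (c :: p) (List.cons c '' (L₂ \ {p})) := by
    rw [Set.union_sdiff_distrib, Set.sdiff_singleton_eq_self hbq, Set.image_cons_sdiff_singleton,
      ← Set.image_insert_eq, Set.insert_sdiff_singleton, Set.insert_eq_of_mem hp]
  have hside {X Y : Set (List α)} : Disjoint (List.cons b '' X) (List.cons c '' Y) := by
    simp [Set.disjoint_left, hbc.symm]
  rw [hL, ← Set.union_insert]
  refine (h₁.image_cons b).union ((h₂.image_cons c).insert ?_ ?_ List.nil_prefix) ?_ ?_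
  · simp
  · simp
  · exact Set.disjoint_insert_right.mpr ⟨by simp [hbc], hside⟩
  · exact Set.disjoint_insert_right.mpr ⟨by simp, hside⟩

end PrefixMatching

namespace SubTree

def leafSet (t : SubTree) : Set (List Bool) := {ℓ | ℓ ∈ t.leafPositions}

def slotSet (t : SubTree) : Set (List Bool) := {s | s ∈ t.slotPositions}

theorem leafSet_leaf : leaf.leafSet = {[]} := by
  ext ℓ
  simp [leafSet, leafPositions]

theorem slotSet_leaf : leaf.slotSet = ∅ := by
  ext s
  simp [slotSet, slotPositions]

theorem leafSet_node (l r : SubTree) :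
    (node l r).leafSet = List.cons false '' l.leafSet ∪ List.cons true '' r.leafSet := by
  ext ℓ
  simp [leafSet, leafPositions]

theorem slotSet_node (l r : SubTree) :
    (node l r).slotSet = insert [] (List.cons false '' l.slotSet ∪ List.cons true '' r.slotSet) := by
  ext s
  simp [slotSet, slotPositions]

theorem leafSet_nonempty : ∀ t : SubTree, t.leafSet.Nonempty
  | .leaf => leafSet_leaf ▸ Set.singleton_nonempty _
  | .node l r => by
      rw [leafSet_node]
      exact (l.leafSet_nonempty.image _).inl

theorem hasPerfectMatching_leafSet_sdiff (t : SubTree) {q : List Bool} (hq : q ∈ t.leafSet) :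
    HasPerfectMatching (fun ℓ s => s <+: ℓ) (t.leafSet \ {q}) t.slotSet := by
  induction t generalizing q with
  | leaf =>
    rw [leafSet_leaf] at hq ⊢
    rw [hq, Set.sdiff_self, slotSet_leaf]
    exact .empty _
  | node l r ihl ihr =>
    rw [leafSet_node] at hq ⊢
    rw [slotSet_node]
    obtain ⟨q, hq, rfl⟩ | ⟨q, hq, rfl⟩ := hq
    · obtain ⟨p, hp⟩ := r.leafSet_nonempty
      exact hasPerfectMatching_prefix_node Bool.false_ne_true (ihl hq) (ihr hp) hp
    · obtain ⟨p, hp⟩ := l.leafSet_nonempty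
      rw [Set.union_comm, Set.union_comm (List.cons false '' _)]
      exact hasPerfectMatching_prefix_node Bool.false_ne_true.symm (ihr hq) (ihl hp) hp

end SubTree

/-- For every leaf `q` there is a bijection `φ` from the remaining leaves to the
slot nodes such that each leaf is assigned to a slot on its root path, i.e. a
slot whose subtree contains the leaf. -/
theorem stmt_12 (t : SubTree) (q : List Bool) (hq : q ∈ t.leafPositions) :
    ∃ φ : {ℓ : List Bool // ℓ ∈ t.leafPositions ∧ ℓ ≠ q} ≃
          {s : List Bool // s ∈ t.slotPositions},
      ∀ ℓ, ((φ ℓ : List Bool)) <+: (ℓ : List Bool) :=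
  let ⟨φ, hφ⟩ := t.hasPerfectMatching_leafSet_sdiff hq
  ⟨φ, hφ⟩
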